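/- arXiv:1602.06284 — 10 statements merged into one kernel-verified Lean document; each statement's English description precedes it below -/
import Mathlib

section
/- In an operational category (a category with finite coproducts, a terminal object 1, such that the maps [▷₁,κ₂],[▷₂,κ₂]: (A+A)+1 → A+1 are jointly monic and the square A → 1, A+1 → 1+1 is a pullback), every coprojection κ₁: A → A+B is a monomorphism. -/
open CategoryTheory Limits

variable {B : Type*} [Category B] [HasBinaryCoproducts B] [HasInitial B] [HasTerminal B]

/-- The partial projection `▷₁ = [κ₁, κ₂ ∘ !] : A+A ⟶ A+1`. -/
noncomputable def tri1 (A : B) : A ⨿ A ⟶ A ⨿ ⊤_ B :=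
  coprod.desc coprod.inl (terminal.from A ≫ coprod.inr)

/-- The partial projection `▷₂ = [κ₂ ∘ !, κ₁] : A+A ⟶ A+1`. -/
noncomputable def tri2 (A : B) : A ⨿ A ⟶ A ⨿ ⊤_ B :=
  coprod.desc (terminal.from A ≫ coprod.inr) coprod.inl

/-- Joint monicity of `[▷₁,κ₂], [▷₂,κ₂] : (A+A)+1 ⟶ A+1` for all `A`. -/
def JMCond (B : Type*) [Category B] [HasBinaryCoproducts B] [HasInitial B] [HasTerminal B] :
    Prop :=
  ∀ (A : B) {X : B} (f g : X ⟶ (A ⨿ A) ⨿ ⊤_ B),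
    f ≫ coprod.desc (tri1 A) coprod.inr = g ≫ coprod.desc (tri1 A) coprod.inr →
    f ≫ coprod.desc (tri2 A) coprod.inr = g ≫ coprod.desc (tri2 A) coprod.inr →
    f = g

/-- The pullback condition: `(! : A ⟶ 1, κ₁ : A ⟶ A+1, κ₁ : 1 ⟶ 1+1, !+!)` is a pullback. -/
def PBCond (B : Type*) [Category B] [HasBinaryCoproducts B] [HasInitial B] [HasTerminal B] :
    Prop :=
  ∀ A : B, IsPullback (terminal.from A) (coprod.inl : A ⟶ A ⨿ ⊤_ B)
    (coprod.inl : ⊤_ B ⟶ (⊤_ B) ⨿ ⊤_ B) (coprod.map (terminal.from A) (𝟙 (⊤_ B)))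

/-- In an operational category, every coprojection `κ₁ : A ⟶ A+B` is monic. -/
theorem stmt1 (hjm : JMCond B) (hpb : PBCond B) :
    ∀ A C : B, Mono (coprod.inl : A ⟶ A ⨿ C) := by
  intro A C
  constructor
  intro X f g h
  have h1 : f ≫ (coprod.inl : A ⟶ A ⨿ ⊤_ B) = g ≫ coprod.inl := by
    have := congrArg (· ≫ coprod.map (𝟙 A) (terminal.from C)) h
    simpa using this
  exact (hpb A).hom_ext (Subsingleton.elim _ _) h1
end

section
/- In an operational category, for any morphism f: A → B and any object C, the square with top arrow f: A → B, left arrow κ₁: A → A+C, bottom arrow f+id: A+C → B+C, and right arrow κ₁: B → B+C is a pullback. -/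
open CategoryTheory Limits

variable {B : Type*} [Category B] [HasBinaryCoproducts B] [HasInitial B] [HasTerminal B]

/-- From the pullback condition, `κ₁ : E ⟶ E ⨿ ⊤` is a monomorphism. -/
lemma inl_top_mono (hpb : PBCond B) (E : B) : Mono (coprod.inl : E ⟶ E ⨿ ⊤_ B) := by
  constructor
  intro Z x y h
  exact (hpb E).hom_ext (terminal.hom_ext _ _) h

/-- Key joint-monicity consequence of the two axioms:
`f + id : A+C ⟶ A'+C` and `id + ! : A+C ⟶ A+⊤` are jointly monic. -/
lemma jointly_monic (hjm : JMCond B) (hpb : PBCond B) {A A' C X : B} (f : A ⟶ A')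
    (x y : X ⟶ A ⨿ C)
    (h1 : x ≫ coprod.map f (𝟙 C) = y ≫ coprod.map f (𝟙 C))
    (h2 : x ≫ coprod.map (𝟙 A) (terminal.from C) = y ≫ coprod.map (𝟙 A) (terminal.from C)) :
    x = y := by
  -- F sends the A-summand into the second copy of D := A⨿C, the C-summand into the first copy.
  let F : A ⨿ C ⟶ ((A ⨿ C) ⨿ (A ⨿ C)) ⨿ ⊤_ B :=
    coprod.desc (coprod.inl ≫ coprod.inr ≫ coprod.inl)
      (coprod.inr ≫ coprod.inl ≫ coprod.inl)
  have hF1 : F ≫ coprod.desc (tri1 (A ⨿ C)) coprod.inr =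
      coprod.map f (𝟙 C) ≫ coprod.desc (terminal.from A' ≫ coprod.inr)
        ((coprod.inr : C ⟶ A ⨿ C) ≫ coprod.inl) := by
    apply coprod.hom_ext
    · simp only [F, coprod.inl_desc_assoc, Category.assoc, coprod.inr_desc, coprod.inl_desc,
        coprod.inl_map_assoc]
      simp [tri1, coprod.inl_desc (X := A ⨿ C) (Y := A ⨿ C), coprod.inr_desc (X := A ⨿ C) (Y := A ⨿ C), coprod.inl_desc_assoc (X := A ⨿ C) (Y := A ⨿ C), coprod.inr_desc_assoc (X := A ⨿ C) (Y := A ⨿ C)]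
    · simp only [F, coprod.inr_desc_assoc, Category.assoc, coprod.inl_desc, coprod.inr_desc,
        coprod.inr_map_assoc]
      simp [tri1, coprod.inl_desc (X := A ⨿ C) (Y := A ⨿ C), coprod.inr_desc (X := A ⨿ C) (Y := A ⨿ C), coprod.inl_desc_assoc (X := A ⨿ C) (Y := A ⨿ C), coprod.inr_desc_assoc (X := A ⨿ C) (Y := A ⨿ C)]
  have hF2 : F ≫ coprod.desc (tri2 (A ⨿ C)) coprod.inr =
      coprod.map (𝟙 A) (terminal.from C) ≫ coprod.desc
        ((coprod.inl : A ⟶ A ⨿ C) ≫ coprod.inl) coprod.inr := by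
    apply coprod.hom_ext
    · simp [F, tri2, coprod.inl_desc (X := A ⨿ C) (Y := A ⨿ C), coprod.inr_desc (X := A ⨿ C) (Y := A ⨿ C), coprod.inl_desc_assoc (X := A ⨿ C) (Y := A ⨿ C), coprod.inr_desc_assoc (X := A ⨿ C) (Y := A ⨿ C), coprod.inl_desc (X := A) (Y := C), coprod.inr_desc (X := A) (Y := C), coprod.inl_desc_assoc (X := A) (Y := C), coprod.inr_desc_assoc (X := A) (Y := C), coprod.inl_desc (X := (A ⨿ C) ⨿ (A ⨿ C)) (Y := ⊤_ B)]
    · simp [F, tri2, coprod.inl_desc (X := A ⨿ C) (Y := A ⨿ C), coprod.inr_desc (X := A ⨿ C) (Y := A ⨿ C), coprod.inl_desc_assoc (X := A ⨿ C) (Y := A ⨿ C), coprod.inr_desc_assoc (X := A ⨿ C) (Y := A ⨿ C), coprod.inl_desc (X := A) (Y := C), coprod.inr_desc (X := A) (Y := C), coprod.inl_desc_assoc (X := A) (Y := C), coprod.inr_desc_assoc (X := A) (Y := C), coprod.inl_desc (X := (A ⨿ C) ⨿ (A ⨿ C)) (Y := ⊤_ B)]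
  have key : x ≫ F = y ≫ F := by
    apply hjm (A ⨿ C)
    · rw [Category.assoc, Category.assoc, hF1, ← Category.assoc, ← Category.assoc, h1]
    · rw [Category.assoc, Category.assoc, hF2, ← Category.assoc, ← Category.assoc, h2]
  have hret : F ≫ coprod.map (coprod.desc (𝟙 (A ⨿ C)) (𝟙 (A ⨿ C))) (𝟙 (⊤_ B)) =
      (coprod.inl : A ⨿ C ⟶ (A ⨿ C) ⨿ ⊤_ B) := by
    apply coprod.hom_ext <;> simp [F, coprod.inl_desc (X := A ⨿ C) (Y := A ⨿ C), coprod.inr_desc (X := A ⨿ C) (Y := A ⨿ C), coprod.inl_desc_assoc (X := A ⨿ C) (Y := A ⨿ C), coprod.inr_desc_assoc (X := A ⨿ C) (Y := A ⨿ C), coprod.inl_desc (X := A) (Y := C), coprod.inr_desc (X := A) (Y := C), coprod.inl_desc_assoc (X := A) (Y := C), coprod.inr_desc_assoc (X := A) (Y := C)]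
  have := inl_top_mono hpb (A ⨿ C)
  have hxy : x ≫ (coprod.inl : A ⨿ C ⟶ (A ⨿ C) ⨿ ⊤_ B) =
      y ≫ (coprod.inl : A ⨿ C ⟶ (A ⨿ C) ⨿ ⊤_ B) := by
    rw [← hret, ← Category.assoc, ← Category.assoc, key]
  exact (cancel_mono _).mp hxy

/-- In an operational category, for any `f : A ⟶ A'` and object `C`, the square
`(f, κ₁ : A ⟶ A+C, κ₁ : A' ⟶ A'+C, f+id : A+C ⟶ A'+C)` is a pullback. -/
theorem stmt2 (hjm : JMCond B) (hpb : PBCond B) :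
    ∀ {A A' : B} (f : A ⟶ A') (C : B),
      IsPullback f (coprod.inl : A ⟶ A ⨿ C) (coprod.inl : A' ⟶ A' ⨿ C)
        (coprod.map f (𝟙 C)) := by
  intro A A' f C
  have hmA' := inl_top_mono hpb A'
  have comm : f ≫ (coprod.inl : A' ⟶ A' ⨿ C) = coprod.inl ≫ coprod.map f (𝟙 C) := by simp
  have hw : ∀ s : PullbackCone (coprod.inl : A' ⟶ A' ⨿ C) (coprod.map f (𝟙 C)),
      terminal.from s.pt ≫ (coprod.inl : ⊤_ B ⟶ (⊤_ B) ⨿ ⊤_ B) =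
      (s.snd ≫ coprod.map (𝟙 A) (terminal.from C)) ≫
        coprod.map (terminal.from A) (𝟙 (⊤_ B)) := by
    intro s
    rw [Category.assoc, coprod.map_map]
    have e1 : coprod.map (𝟙 A ≫ terminal.from A) (terminal.from C ≫ 𝟙 (⊤_ B)) =
        coprod.map f (𝟙 C) ≫ coprod.map (terminal.from A') (terminal.from C) := by
      rw [coprod.map_map]
      congr 1 <;> apply terminal.hom_ext
    rw [e1, ← Category.assoc, ← s.condition, Category.assoc]
    have e2 : (coprod.inl : A' ⟶ A' ⨿ C) ≫ coprod.map (terminal.from A') (terminal.from C) =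
        terminal.from A' ≫ coprod.inl := by simp
    rw [e2, ← Category.assoc, terminal.comp_from]
  have key : ∀ s : PullbackCone (coprod.inl : A' ⟶ A' ⨿ C) (coprod.map f (𝟙 C)),
      (hpb A).lift (terminal.from s.pt) (s.snd ≫ coprod.map (𝟙 A) (terminal.from C)) (hw s) ≫ f
        = s.fst := by
    intro s
    rw [← cancel_mono (coprod.inl : A' ⟶ A' ⨿ ⊤_ B)]
    have e3 : f ≫ (coprod.inl : A' ⟶ A' ⨿ ⊤_ B) =
        (coprod.inl : A ⟶ A ⨿ ⊤_ B) ≫ coprod.map f (𝟙 (⊤_ B)) := by simp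
    rw [Category.assoc, e3, (hpb A).lift_snd_assoc, Category.assoc, coprod.map_map]
    have e4 : coprod.map (𝟙 A ≫ f) (terminal.from C ≫ 𝟙 (⊤_ B)) =
        coprod.map f (𝟙 C) ≫ coprod.map (𝟙 A') (terminal.from C) := by
      rw [coprod.map_map]; simp
    rw [e4, ← Category.assoc, ← s.condition, Category.assoc]
    simp
  apply IsPullback.of_isLimit' ⟨comm⟩
  refine PullbackCone.IsLimit.mk comm
    (fun s => (hpb A).lift (terminal.from s.pt)
      (s.snd ≫ coprod.map (𝟙 A) (terminal.from C)) (hw s)) (fun s => key s) ?_ ?_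
  · intro s
    apply jointly_monic hjm hpb f
    · rw [Category.assoc, coprod.inl_map, ← Category.assoc, key s, s.condition]
    · have e5 : (coprod.inl : A ⟶ A ⨿ C) ≫ coprod.map (𝟙 A) (terminal.from C) =
          (coprod.inl : A ⟶ A ⨿ ⊤_ B) := by simp
      rw [Category.assoc, e5, (hpb A).lift_snd]
  · intro s m hm1 hm2
    apply (hpb A).hom_ext (terminal.hom_ext _ _)
    have e5 : (coprod.inl : A ⟶ A ⨿ C) ≫ coprod.map (𝟙 A) (terminal.from C) =
        (coprod.inl : A ⟶ A ⨿ ⊤_ B) := by simp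
    rw [(hpb A).lift_snd, ← hm2, Category.assoc, e5]
end

section
/- In an operational category, for all objects A and B, the square with initial object 0 in the top left corner, arrows !: 0 → A and !: 0 → B, and coprojections κ₁: A → A+B, κ₂: B → A+B, is a pullback. -/
open CategoryTheory Limits

variable {B : Type*} [Category B] [HasBinaryCoproducts B] [HasInitial B] [HasTerminal B]

/-- From the pullback condition, `inl : A ⟶ A ⨿ ⊤` is a monomorphism. -/
lemma aux_mono_inl (hpb : PBCond B) (A : B) : Mono (coprod.inl : A ⟶ A ⨿ ⊤_ B) := by
  constructor
  intro X u v h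
  exact (hpb A).hom_ext (Subsingleton.elim _ _) h

/-- Any two maps into the initial object are equal. -/
lemma aux_hom_bot_ext (hpb : PBCond B) {X : B} (u v : X ⟶ ⊥_ B) : u = v := by
  have m := aux_mono_inl hpb (⊥_ B)
  have key : ∀ p q : X ⟶ (⊥_ B) ⨿ ⊤_ B, p = q := by
    intro p q
    have hid : coprod.desc (initial.to (⊤_ B)) (𝟙 (⊤_ B)) ≫
        (coprod.inr : ⊤_ B ⟶ (⊥_ B) ⨿ ⊤_ B) = 𝟙 _ := by
      apply coprod.hom_ext
      · exact initial.hom_ext _ _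
      · simp only [coprod.inr_desc_assoc, Category.id_comp, Category.comp_id]
    calc p = p ≫ (coprod.desc (initial.to (⊤_ B)) (𝟙 (⊤_ B)) ≫ coprod.inr) := by
            rw [hid, Category.comp_id]
      _ = (p ≫ coprod.desc (initial.to (⊤_ B)) (𝟙 (⊤_ B))) ≫ coprod.inr := by
            rw [Category.assoc]
      _ = (q ≫ coprod.desc (initial.to (⊤_ B)) (𝟙 (⊤_ B))) ≫ coprod.inr := by
            congr 1; exact Subsingleton.elim _ _
      _ = q := by rw [Category.assoc, hid, Category.comp_id]
  exact (cancel_mono (coprod.inl : ⊥_ B ⟶ (⊥_ B) ⨿ ⊤_ B)).1 (key _ _)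

/-- Key factorization lemma: if `x : X ⟶ A` is "undefined everywhere" and `l : X ⟶ 0`
factors similarly, then `x` factors through the initial object. -/
lemma aux_factor (hjm : JMCond B) (hpb : PBCond B) {X A : B} (x : X ⟶ A) (l : X ⟶ ⊥_ B)
    (e1 : x ≫ coprod.inl = terminal.from X ≫ (coprod.inr : ⊤_ B ⟶ A ⨿ ⊤_ B))
    (e3 : (l ≫ initial.to A) ≫ coprod.inl =
      terminal.from X ≫ (coprod.inr : ⊤_ B ⟶ A ⨿ ⊤_ B)) :
    x = l ≫ initial.to A := by
  have m := aux_mono_inl hpb A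
  have jm := hjm A (x ≫ coprod.inl ≫ coprod.inl)
    ((l ≫ initial.to A) ≫ coprod.inr ≫ coprod.inl) ?_ ?_
  · -- compose jm with desc(desc(inl, inl), inr) : (A ⨿ A) ⨿ ⊤ ⟶ A ⨿ ⊤
    have h := congrArg (· ≫ coprod.desc
      (coprod.desc (coprod.inl : A ⟶ A ⨿ ⊤_ B) coprod.inl) coprod.inr) jm
    simp only [Category.assoc, coprod.inl_desc, coprod.inr_desc] at h
    rw [← Category.assoc] at h
    exact (cancel_mono (coprod.inl : A ⟶ A ⨿ ⊤_ B)).1 h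
  · -- composing with desc (tri1 A) inr
    simp only [tri1, Category.assoc, coprod.inl_desc, coprod.inr_desc]
    simp only [← Category.assoc, terminal.comp_from]
    exact e1
  · -- composing with desc (tri2 A) inr
    simp only [tri2, Category.assoc, coprod.inl_desc, coprod.inr_desc]
    simp only [← Category.assoc, terminal.comp_from]
    exact e3.symm

/-- In an operational category, for all `A B`, the square with the initial
object `0` at the corner, `! : 0 ⟶ A`, `! : 0 ⟶ B`, `κ₁ : A ⟶ A+B`, `κ₂ : B ⟶ A+B`,
is a pullback. -/
theorem stmt3 (hjm : JMCond B) (hpb : PBCond B) :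
    ∀ A C : B, IsPullback (initial.to A) (initial.to C)
      (coprod.inl : A ⟶ A ⨿ C) (coprod.inr : C ⟶ A ⨿ C) := by
  intro A C
  have weq : initial.to A ≫ (coprod.inl : A ⟶ A ⨿ C) =
      initial.to C ≫ (coprod.inr : C ⟶ A ⨿ C) := initial.hom_ext _ _
  -- for every cone (x, y), we construct a lift and prove the factorizations
  have main : ∀ (s : PullbackCone (coprod.inl : A ⟶ A ⨿ C) (coprod.inr : C ⟶ A ⨿ C)),
      ∃ l : s.pt ⟶ ⊥_ B, l ≫ initial.to A = s.fst ∧ l ≫ initial.to C = s.snd := by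
    intro s
    set X := s.pt with hX
    set x := s.fst with hx
    set y := s.snd with hy
    have comm : x ≫ coprod.inl = y ≫ coprod.inr := s.condition
    -- e1 : x ≫ inl = !_X ≫ inr in A ⨿ ⊤
    have e1 : x ≫ coprod.inl = terminal.from X ≫ (coprod.inr : ⊤_ B ⟶ A ⨿ ⊤_ B) := by
      have h := congrArg (· ≫ coprod.map (𝟙 A) (terminal.from C)) comm
      simp only [Category.assoc, coprod.inl_map, coprod.inr_map, Category.id_comp] at h
      rw [h, ← Category.assoc,
        show y ≫ terminal.from C = terminal.from X from Subsingleton.elim _ _]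
    -- e2 : y ≫ inl = !_X ≫ inr in C ⨿ ⊤
    have e2 : y ≫ coprod.inl = terminal.from X ≫ (coprod.inr : ⊤_ B ⟶ C ⨿ ⊤_ B) := by
      have h := congrArg (· ≫ coprod.desc (terminal.from A ≫ coprod.inr)
        (coprod.inl : C ⟶ C ⨿ ⊤_ B)) comm
      simp only [Category.assoc, coprod.inl_desc, coprod.inr_desc] at h
      rw [← h, ← Category.assoc,
        show x ≫ terminal.from A = terminal.from X from Subsingleton.elim _ _]
    -- e0 : !_X ≫ inl = !_X ≫ inr in ⊤ ⨿ ⊤, via the joint-monicity condition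
    have e0 : terminal.from X ≫ (coprod.inl : ⊤_ B ⟶ (⊤_ B) ⨿ ⊤_ B) =
        terminal.from X ≫ coprod.inr := by
      have jm := hjm A (x ≫ coprod.inl ≫ coprod.inl) (x ≫ coprod.inr ≫ coprod.inl) ?_ ?_
      · have h := congrArg (· ≫ coprod.desc
          (coprod.desc (terminal.from A ≫ coprod.inl) (terminal.from A ≫ coprod.inr))
          (coprod.inr : ⊤_ B ⟶ (⊤_ B) ⨿ ⊤_ B)) jm
        simp only [Category.assoc, coprod.inl_desc, coprod.inr_desc] at h
        simp only [← Category.assoc, terminal.comp_from] at h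
        exact h
      · simp only [tri1, Category.assoc, coprod.inl_desc, coprod.inr_desc]
        simp only [← Category.assoc, terminal.comp_from]
        exact e1
      · simp only [tri2, Category.assoc, coprod.inl_desc, coprod.inr_desc]
        simp only [← Category.assoc, terminal.comp_from]
        exact e1.symm
    -- construct the lift X ⟶ ⊥ via the pullback condition at ⊥
    have w : terminal.from X ≫ (coprod.inl : ⊤_ B ⟶ (⊤_ B) ⨿ ⊤_ B) =
        (terminal.from X ≫ (coprod.inr : ⊤_ B ⟶ (⊥_ B) ⨿ ⊤_ B)) ≫
          coprod.map (terminal.from (⊥_ B)) (𝟙 (⊤_ B)) := by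
      rw [e0]
      simp
    set l : X ⟶ ⊥_ B := (hpb (⊥_ B)).lift (terminal.from X)
      (terminal.from X ≫ coprod.inr) w with hl
    have lsnd : l ≫ coprod.inl = terminal.from X ≫ (coprod.inr : ⊤_ B ⟶ (⊥_ B) ⨿ ⊤_ B) :=
      (hpb (⊥_ B)).lift_snd _ _ _
    -- the two "everywhere-undefined" equations for l
    have e3A : (l ≫ initial.to A) ≫ coprod.inl =
        terminal.from X ≫ (coprod.inr : ⊤_ B ⟶ A ⨿ ⊤_ B) := by
      have h := congrArg (· ≫ coprod.map (initial.to A) (𝟙 (⊤_ B))) lsnd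
      simp only [Category.assoc, coprod.inl_map, coprod.inr_map, Category.id_comp] at h
      rw [Category.assoc]
      exact h
    have e3C : (l ≫ initial.to C) ≫ coprod.inl =
        terminal.from X ≫ (coprod.inr : ⊤_ B ⟶ C ⨿ ⊤_ B) := by
      have h := congrArg (· ≫ coprod.map (initial.to C) (𝟙 (⊤_ B))) lsnd
      simp only [Category.assoc, coprod.inl_map, coprod.inr_map, Category.id_comp] at h
      rw [Category.assoc]
      exact h
    exact ⟨l, (aux_factor hjm hpb x l e1 e3A).symm, (aux_factor hjm hpb y l e2 e3C).symm⟩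
  exact IsPullback.of_isLimit
    (PullbackCone.IsLimit.mk weq (fun s => (main s).choose)
      (fun s => (main s).choose_spec.1)
      (fun s => (main s).choose_spec.2)
      (fun s m _ _ => aux_hom_bot_ext hpb _ _))
end

section
/- Let C be a category with a zero object and finite coproducts in which the two 'projections' ▷₁,▷₂: A+A → A (defined by ▷₁∘κ₁ = id, ▷₁∘κ₂ = 0, ▷₂∘κ₁ = 0, ▷₂∘κ₂ = id) are jointly monic for every object A. Then for any finite coproduct ∐_{x∈X} A_x, the family of projections ▷_y: ∐_x A_x → A_y (defined by ▷_y∘κ_x = id if x = y and 0 otherwise) is jointly monic. -/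
open CategoryTheory Limits

section Aux

variable {C : Type*} [Category C] [HasZeroObject C] [HasZeroMorphisms C]

noncomputable def myproj {X : Type} [DecidableEq X] (f : X → C) [HasCoproduct f] (y : X) :
    ∐ f ⟶ f y :=
  Sigma.desc (fun x => if hx : x = y then eqToHom (by rw [hx]) else 0)

theorem binJM [HasBinaryCoproducts C]
    (hjm : ∀ (A : C) {P : C} (g h : P ⟶ A ⨿ A),
      g ≫ coprod.desc (𝟙 A) 0 = h ≫ coprod.desc (𝟙 A) 0 →
      g ≫ coprod.desc 0 (𝟙 A) = h ≫ coprod.desc 0 (𝟙 A) → g = h)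
    {A B P : C} (g h : P ⟶ A ⨿ B)
    (h1 : g ≫ coprod.desc (𝟙 A) 0 = h ≫ coprod.desc (𝟙 A) 0)
    (h2 : g ≫ coprod.desc 0 (𝟙 B) = h ≫ coprod.desc 0 (𝟙 B)) : g = h := by
  let m : A ⨿ B ⟶ (A ⨿ B) ⨿ (A ⨿ B) :=
    coprod.desc (coprod.inl ≫ coprod.inl) (coprod.inr ≫ coprod.inr)
  have e1 : m ≫ coprod.desc (𝟙 (A ⨿ B)) 0 = coprod.desc (𝟙 A) 0 ≫ coprod.inl := by
    apply coprod.hom_ext <;> simp [m]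
  have e2 : m ≫ coprod.desc 0 (𝟙 (A ⨿ B)) = coprod.desc 0 (𝟙 B) ≫ coprod.inr := by
    apply coprod.hom_ext <;> simp [m]
  have hm : g ≫ m = h ≫ m := by
    apply hjm (A ⨿ B)
    · rw [Category.assoc, Category.assoc, e1, ← Category.assoc, ← Category.assoc, h1]
    · rw [Category.assoc, Category.assoc, e2, ← Category.assoc, ← Category.assoc, h2]
  have hr : m ≫ coprod.desc (𝟙 (A ⨿ B)) (𝟙 (A ⨿ B)) = 𝟙 (A ⨿ B) := by
    apply coprod.hom_ext <;> simp [m]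
  calc g = g ≫ m ≫ coprod.desc (𝟙 (A ⨿ B)) (𝟙 (A ⨿ B)) := by rw [hr, Category.comp_id]
    _ = h ≫ m ≫ coprod.desc (𝟙 (A ⨿ B)) (𝟙 (A ⨿ B)) := by
        rw [← Category.assoc, hm, Category.assoc]
    _ = h := by rw [hr, Category.comp_id]

theorem mainAux [HasBinaryCoproducts C] [HasFiniteCoproducts C]
    (hjm : ∀ (A : C) {P : C} (g h : P ⟶ A ⨿ A),
      g ≫ coprod.desc (𝟙 A) 0 = h ≫ coprod.desc (𝟙 A) 0 →
      g ≫ coprod.desc 0 (𝟙 A) = h ≫ coprod.desc 0 (𝟙 A) → g = h) :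
    ∀ (n : ℕ) (X : Type) (_ : Fintype X) (_ : DecidableEq X), Fintype.card X = n →
      ∀ (f : X → C) (_ : HasCoproduct f) (P : C) (g h : P ⟶ ∐ f),
      (∀ y, g ≫ myproj f y = h ≫ myproj f y) → g = h := by
  intro n
  induction n with
  | zero =>
    intro X _ _ hcard f _ P g h _
    haveI : IsEmpty X := Fintype.card_eq_zero_iff.mp hcard
    have hid : 𝟙 (∐ f) = (0 : ∐ f ⟶ ∐ f) := by
      apply Sigma.hom_ext
      intro x; exact isEmptyElim x
    calc g = g ≫ 𝟙 (∐ f) := by rw [Category.comp_id]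
      _ = h ≫ 𝟙 (∐ f) := by rw [hid, comp_zero, comp_zero]
      _ = h := by rw [Category.comp_id]
  | succ n ih =>
    intro X _ _ hcard f _ P g h hp
    have hpos : 0 < Fintype.card X := by omega
    obtain ⟨y0⟩ := Fintype.card_pos_iff.mp hpos
    let X' := {x : X // x ≠ y0}
    haveI : Fintype X' := inferInstance
    have hcard' : Fintype.card X' = n := by
      have h2 : Fintype.card {x : X // ¬ x = y0} = n := by
        rw [Fintype.card_subtype_compl, Fintype.card_subtype_eq, hcard]
        omega
      exact h2
    let f' : X' → C := fun x => f x.1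
    haveI : HasCoproduct f' := inferInstance
    let φ : ∐ f ⟶ f y0 ⨿ ∐ f' := Sigma.desc (fun x =>
      if hx : x = y0 then eqToHom (by rw [hx]) ≫ coprod.inl
      else Sigma.ι f' ⟨x, hx⟩ ≫ coprod.inr)
    let ψ : f y0 ⨿ ∐ f' ⟶ ∐ f :=
      coprod.desc (Sigma.ι f y0) (Sigma.desc fun x' => Sigma.ι f x'.1)
    have hsplit : φ ≫ ψ = 𝟙 (∐ f) := by
      apply Sigma.hom_ext
      intro x
      by_cases hx : x = y0
      · subst hx
        simp [φ, ψ]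
        erw [coprod.inl_desc]
      · simp [φ, ψ, hx]
        erw [coprod.inr_desc]
        simp
    have eφ1 : φ ≫ coprod.desc (𝟙 (f y0)) 0 = myproj f y0 := by
      apply Sigma.hom_ext
      intro x
      by_cases hx : x = y0
      · subst hx
        simp [φ, myproj]
        erw [coprod.inl_desc]
      · simp [φ, myproj, hx]
        erw [coprod.inr_desc]
        simp
    have eφ2 : ∀ y' : X', φ ≫ coprod.desc 0 (𝟙 (∐ f')) ≫ myproj f' y' = myproj f y'.1 := by
      intro y'
      apply Sigma.hom_ext
      intro x
      by_cases hx : x = y0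
      · subst hx
        have hne : x ≠ y'.1 := fun hh => y'.2 hh.symm
        simp [φ, myproj, hne]
        erw [coprod.inl_desc]
      · by_cases hxy : x = y'.1
        · subst hxy
          simp [φ, myproj, hx]
          erw [coprod.inr_desc]
          simp [myproj]
          rfl
        · have hsub : (⟨x, hx⟩ : X') ≠ y' := fun hh => hxy (congrArg Subtype.val hh)
          simp [φ, myproj, hx, hxy, hsub]
          erw [coprod.inr_desc]
          simp [hsub]
    have key : g ≫ φ = h ≫ φ := by
      apply binJM hjm
      · rw [Category.assoc, Category.assoc, eφ1]; exact hp y0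
      · apply ih X' inferInstance inferInstance hcard' f' inferInstance P
          ((g ≫ φ) ≫ coprod.desc 0 (𝟙 (∐ f'))) ((h ≫ φ) ≫ coprod.desc 0 (𝟙 (∐ f')))
        intro y'
        have e := eφ2 y'
        calc ((g ≫ φ) ≫ coprod.desc 0 (𝟙 (∐ f'))) ≫ myproj f' y'
            = g ≫ (φ ≫ coprod.desc 0 (𝟙 (∐ f')) ≫ myproj f' y') := by
              simp only [Category.assoc]
          _ = g ≫ myproj f y'.1 := by rw [e]
          _ = h ≫ myproj f y'.1 := hp y'.1
          _ = h ≫ (φ ≫ coprod.desc 0 (𝟙 (∐ f')) ≫ myproj f' y') := by rw [e]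
          _ = ((h ≫ φ) ≫ coprod.desc 0 (𝟙 (∐ f'))) ≫ myproj f' y' := by
              simp only [Category.assoc]
    calc g = g ≫ φ ≫ ψ := by rw [hsplit, Category.comp_id]
      _ = h ≫ φ ≫ ψ := by rw [← Category.assoc, key, Category.assoc]
      _ = h := by rw [hsplit, Category.comp_id]

end Aux

/-- In a category with a zero object and finite coproducts in which the two
projections `▷₁, ▷₂ : A+A ⟶ A` are jointly monic for all `A`, the projections
`▷_y : ∐ A_x ⟶ A_y` of any finite coproduct are jointly monic. -/
theorem stmt4 {C : Type*} [Category C] [HasZeroObject C] [HasZeroMorphisms C]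
    [HasBinaryCoproducts C] [HasFiniteCoproducts C]
    (hjm : ∀ (A : C) {P : C} (g h : P ⟶ A ⨿ A),
      g ≫ coprod.desc (𝟙 A) 0 = h ≫ coprod.desc (𝟙 A) 0 →
      g ≫ coprod.desc 0 (𝟙 A) = h ≫ coprod.desc 0 (𝟙 A) → g = h)
    {X : Type} [Fintype X] [DecidableEq X] (f : X → C) [HasCoproduct f]
    {P : C} (g h : P ⟶ ∐ f)
    (hp : ∀ y : X,
      g ≫ Sigma.desc (fun x => if hx : x = y then eqToHom (by rw [hx]) else 0) =
      h ≫ Sigma.desc (fun x => if hx : x = y then eqToHom (by rw [hx]) else 0)) :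
    g = h := by
  exact mainAux hjm (Fintype.card X) X inferInstance inferInstance rfl f inferInstance P g h hp
end

section
/- Let B be an operational category. Then Par(B), with distinguished object I = 1 and discarding maps ♦_A := κ₁∘!: A → 1+1, is an operational category in partial form: it has finite coproducts and a zero object, ♦_I = id_I and ♦_{A+B} = [♦_A, ♦_B] in Par(B), the projections ▷₁,▷₂: A+A → A are jointly monic, and every partial morphism f: A → B factors as ▷₁ composed with a unique total morphism g: A → B+I (where g total means ♦∘g = ♦). -/
open CategoryTheory Limits

variable {B : Type*} [Category B] [HasBinaryCoproducts B] [HasInitial B] [HasTerminal B]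

/-- Kleisli composition in `Par(B)`. -/
noncomputable def pcomp {A X D : B} (f : A ⟶ X ⨿ ⊤_ B) (g : X ⟶ D ⨿ ⊤_ B) :
    A ⟶ D ⨿ ⊤_ B :=
  f ≫ coprod.desc g coprod.inr

/-- The discarding map `♦_A = κ₁ ∘ ! : A ⟶ 1+1`, a partial arrow `A ⟶ 1` in `Par(B)`. -/
noncomputable def dsc (A : B) : A ⟶ (⊤_ B) ⨿ ⊤_ B :=
  terminal.from A ≫ coprod.inl

/-- if `B` is an operational category, then `Par(B)` with `I = 1` and
discarding `♦_A = κ₁ ∘ !` is an operational category in partial form: it has a zero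
object and finite coproducts, `♦_I = id`, `♦_{A+B} = [♦_A,♦_B]`, the projections
`▷₁,▷₂ : A+A ⟶ A` are jointly monic in `Par(B)`, and every partial arrow `f : A ⟶ X`
factors as `▷₁` after a unique total `g : A ⟶ X + I`. -/
theorem stmt8 (hjm : JMCond B) (hpb : PBCond B) :
    -- zero object in Par(B)
    (∀ (A : B) (f g : A ⟶ (⊥_ B) ⨿ ⊤_ B), f = g) ∧
    (∀ (A : B) (f g : (⊥_ B) ⟶ A ⨿ ⊤_ B), f = g) ∧
    -- binary coproducts in Par(B)
    (∀ (A A' X : B) (f : A ⟶ X ⨿ ⊤_ B) (g : A' ⟶ X ⨿ ⊤_ B),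
      ∃! h : A ⨿ A' ⟶ X ⨿ ⊤_ B,
        pcomp ((coprod.inl : A ⟶ A ⨿ A') ≫ coprod.inl) h = f ∧
        pcomp ((coprod.inr : A' ⟶ A ⨿ A') ≫ coprod.inl) h = g) ∧
    -- ♦_I = id_I in Par(B)
    (dsc (⊤_ B) = coprod.inl) ∧
    -- ♦_{A+A'} = [♦_A, ♦_A'] in Par(B)
    (∀ A A' : B, dsc (A ⨿ A') = coprod.desc (dsc A) (dsc A')) ∧
    -- joint monicity of ▷₁, ▷₂ : A+A ⟶ A in Par(B)
    (∀ (A : B) {X : B} (f g : X ⟶ (A ⨿ A) ⨿ ⊤_ B),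
      pcomp f (tri1 A) = pcomp g (tri1 A) →
      pcomp f (tri2 A) = pcomp g (tri2 A) → f = g) ∧
    -- unique total factorization through X + I
    (∀ {A X : B} (f : A ⟶ X ⨿ ⊤_ B),
      ∃! g : A ⟶ (X ⨿ ⊤_ B) ⨿ ⊤_ B,
        pcomp g (dsc (X ⨿ ⊤_ B)) = dsc A ∧
        pcomp g (coprod.desc coprod.inl coprod.inr : X ⨿ ⊤_ B ⟶ X ⨿ ⊤_ B) = f) := by
  -- `inr : ⊤ ⟶ ⊥ ⨿ ⊤` is inverse to the terminal map, so maps into `⊥ ⨿ ⊤` are unique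
  have hid : (𝟙 ((⊥_ B) ⨿ ⊤_ B)) = terminal.from _ ≫ coprod.inr := by
    apply coprod.hom_ext
    · exact initial.hom_ext _ _
    · rw [Category.comp_id, ← Category.assoc]
      have : (coprod.inr : ⊤_ B ⟶ (⊥_ B) ⨿ ⊤_ B) ≫ terminal.from _ = 𝟙 (⊤_ B) :=
        terminal.hom_ext _ _
      rw [this, Category.id_comp]
  have hzero : ∀ (A : B) (f : A ⟶ (⊥_ B) ⨿ ⊤_ B), f = terminal.from A ≫ coprod.inr := by
    intro A f
    have : f = f ≫ (terminal.from _ ≫ coprod.inr) := by rw [← hid, Category.comp_id]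
    rw [this, ← Category.assoc]
    congr 1
    exact terminal.hom_ext _ _
  refine ⟨?_, ?_, ?_, ?_, ?_, ?_, ?_⟩
  · intro A f g; rw [hzero A f, hzero A g]
  · intro A f g; exact initial.hom_ext _ _
  · intro A A' X f g
    refine ⟨coprod.desc f g, ⟨?_, ?_⟩, ?_⟩
    · simp [pcomp]; rw [coprod.inl_desc, coprod.inl_desc]
    · simp [pcomp]; rw [coprod.inl_desc, coprod.inr_desc]
    · rintro h ⟨h1, h2⟩
      apply coprod.hom_ext
      · rw [← h1]; simp [pcomp]; rw [coprod.inl_desc, coprod.inl_desc]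
      · rw [← h2]; simp [pcomp]; rw [coprod.inr_desc, coprod.inl_desc]
  · have : terminal.from (⊤_ B) = 𝟙 (⊤_ B) := terminal.hom_ext _ _
    simp [dsc, this]
  · intro A A'
    apply coprod.hom_ext
    · rw [coprod.inl_desc, dsc, dsc, ← Category.assoc]
      congr 1; exact terminal.hom_ext _ _
    · rw [coprod.inr_desc, dsc, dsc, ← Category.assoc]
      congr 1; exact terminal.hom_ext _ _
  · intro A X f g h1 h2
    exact hjm A f g h1 h2
  · intro A X f
    have hdesc : (coprod.desc (dsc (X ⨿ ⊤_ B)) coprod.inr :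
        (X ⨿ ⊤_ B) ⨿ ⊤_ B ⟶ (⊤_ B) ⨿ ⊤_ B) =
        coprod.map (terminal.from (X ⨿ ⊤_ B)) (𝟙 (⊤_ B)) := by
      apply coprod.hom_ext <;> simp [dsc]
      · rw [coprod.inl_desc]
      · rw [coprod.inr_desc]
    refine ⟨f ≫ coprod.inl, ⟨?_, ?_⟩, ?_⟩
    · rw [pcomp, Category.assoc, coprod.inl_desc, dsc, ← Category.assoc]
      congr 1
      exact terminal.hom_ext _ _
    · simp [pcomp]; rw [coprod.inl_desc, Category.comp_id]
    · rintro g ⟨hg1, hg2⟩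
      have hsq : terminal.from A ≫ (coprod.inl : ⊤_ B ⟶ (⊤_ B) ⨿ ⊤_ B) =
          g ≫ coprod.map (terminal.from (X ⨿ ⊤_ B)) (𝟙 (⊤_ B)) := by
        rw [← hdesc]
        exact hg1.symm
      set l := (hpb (X ⨿ ⊤_ B)).lift (terminal.from A) g hsq with hldef
      have hl2 : l ≫ coprod.inl = g := (hpb (X ⨿ ⊤_ B)).lift_snd _ _ _
      have hlf : l = f := by
        rw [← hg2, pcomp, ← hl2, Category.assoc, coprod.inl_desc, coprod.desc_inl_inr,
          Category.comp_id]
      rw [← hl2, hlf]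
end

section
/- Let B be a positive operational category. Then every isomorphism in Par(B) is total: if f: A → B+1 is invertible as a morphism of Par(B), then (!+id)∘f = κ₁∘!: A → 1+1. -/
open CategoryTheory Limits

variable {B : Type*} [Category B] [HasBinaryCoproducts B] [HasInitial B] [HasTerminal B]

def PosCond (B : Type*) [Category B] [HasBinaryCoproducts B] [HasInitial B]
    [HasTerminal B] : Prop :=
  ∀ A X : B, IsPullback (terminal.from A) (coprod.inl : A ⟶ A ⨿ X)
    (coprod.inl : ⊤_ B ⟶ (⊤_ B) ⨿ ⊤_ B)
    (coprod.map (terminal.from A) (terminal.from X))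

/-- in a positive operational category, every isomorphism of `Par(B)`
is total: if `f : A ⟶ X+1` has a two-sided Kleisli inverse, then
`(!+id) ∘ f = κ₁ ∘ !`. -/
theorem stmt14 (hjm : JMCond B) (hpb : PBCond B) (hpos : PosCond B) :
    ∀ {A X : B} (f : A ⟶ X ⨿ ⊤_ B) (g : X ⟶ A ⨿ ⊤_ B),
      pcomp f g = (coprod.inl : A ⟶ A ⨿ ⊤_ B) →
      pcomp g f = (coprod.inl : X ⟶ X ⨿ ⊤_ B) →
      f ≫ coprod.map (terminal.from X) (𝟙 (⊤_ B)) = terminal.from A ≫ coprod.inl := by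
  intro A X f g hfg _hgf
  have huniq : ∀ {Y : B} (u v : Y ⟶ ⊤_ B), u = v := fun u v => terminal.hom_ext u v
  set g' : X ⟶ (⊤_ B) ⨿ ⊤_ B := g ≫ coprod.map (terminal.from A) (𝟙 (⊤_ B)) with hg'
  -- Step 1: f ≫ [g', inr] = !_A ≫ inl
  have E : f ≫ coprod.desc g' coprod.inr = terminal.from A ≫ coprod.inl := by
    have h1 := congrArg (fun h => h ≫ coprod.map (terminal.from A) (𝟙 (⊤_ B))) hfg
    simp only [pcomp] at h1
    rw [Category.assoc] at h1
    have h2 : coprod.desc g (coprod.inr : ⊤_ B ⟶ A ⨿ ⊤_ B)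
        ≫ coprod.map (terminal.from A) (𝟙 (⊤_ B)) = coprod.desc g' coprod.inr := by
      apply coprod.hom_ext <;> simp [hg']
    rw [h2] at h1
    rw [h1]
    simp
  -- auxiliary map n : X ⨿ ⊤ ⟶ ⊤ ⨿ (⊤ ⨿ ⊤)
  set n : X ⨿ ⊤_ B ⟶ (⊤_ B) ⨿ ((⊤_ B) ⨿ ⊤_ B) :=
    coprod.desc (g' ≫ coprod.desc coprod.inl (coprod.inl ≫ coprod.inr))
      (coprod.inr ≫ coprod.inr) with hn
  have key : coprod.desc (coprod.inl : ⊤_ B ⟶ (⊤_ B) ⨿ ((⊤_ B) ⨿ ⊤_ B))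
      (coprod.inl ≫ coprod.inr) ≫
      coprod.map (terminal.from (⊤_ B)) (terminal.from ((⊤_ B) ⨿ ⊤_ B))
      = 𝟙 ((⊤_ B) ⨿ ⊤_ B) := by
    apply coprod.hom_ext
    · rw [coprod.inl_desc_assoc, coprod.inl_map, Category.comp_id,
        huniq (terminal.from (⊤_ B)) (𝟙 (⊤_ B)), Category.id_comp]
    · rw [coprod.inr_desc_assoc, Category.assoc, coprod.inr_map, Category.comp_id,
        ← Category.assoc, huniq (coprod.inl ≫ terminal.from ((⊤_ B) ⨿ ⊤_ B)) (𝟙 (⊤_ B)),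
        Category.id_comp]
  have hcomp : n ≫ coprod.map (terminal.from (⊤_ B)) (terminal.from ((⊤_ B) ⨿ ⊤_ B))
      = coprod.desc g' coprod.inr := by
    apply coprod.hom_ext
    · rw [hn, coprod.inl_desc_assoc, Category.assoc, key, Category.comp_id, coprod.inl_desc]
    · rw [hn, coprod.inr_desc_assoc, Category.assoc, coprod.inr_map, coprod.inr_desc,
        ← Category.assoc, huniq (coprod.inr ≫ terminal.from ((⊤_ B) ⨿ ⊤_ B)) (𝟙 (⊤_ B)),
        Category.id_comp]
  -- pullback lifting: f ≫ n factors through inl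
  have hp := hpos (⊤_ B) ((⊤_ B) ⨿ ⊤_ B)
  have w : terminal.from A ≫ (coprod.inl : ⊤_ B ⟶ (⊤_ B) ⨿ ⊤_ B)
      = (f ≫ n) ≫ coprod.map (terminal.from (⊤_ B)) (terminal.from ((⊤_ B) ⨿ ⊤_ B)) := by
    rw [Category.assoc, hcomp, E]
  have hlift := hp.lift_snd (terminal.from A) (f ≫ n) w
  rw [huniq (hp.lift (terminal.from A) (f ≫ n) w) (terminal.from A)] at hlift
  have Fn : f ≫ n = terminal.from A ≫ coprod.inl := hlift.symm
  -- retract r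
  set r : (⊤_ B) ⨿ ((⊤_ B) ⨿ ⊤_ B) ⟶ (⊤_ B) ⨿ ⊤_ B :=
    coprod.desc coprod.inl (coprod.desc coprod.inl coprod.inr) with hr
  have hnr : n ≫ r = coprod.map (terminal.from X) (𝟙 (⊤_ B)) := by
    apply coprod.hom_ext
    · rw [hn, coprod.inl_desc_assoc, coprod.inl_map]
      have h3 : coprod.desc (coprod.inl : ⊤_ B ⟶ (⊤_ B) ⨿ ((⊤_ B) ⨿ ⊤_ B))
          (coprod.inl ≫ coprod.inr) ≫ r
          = terminal.from ((⊤_ B) ⨿ ⊤_ B) ≫ coprod.inl := by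
        apply coprod.hom_ext
        · rw [coprod.inl_desc_assoc, hr, coprod.inl_desc, ← Category.assoc,
            huniq (coprod.inl ≫ terminal.from ((⊤_ B) ⨿ ⊤_ B)) (𝟙 (⊤_ B)), Category.id_comp]
        · rw [coprod.inr_desc_assoc, Category.assoc, hr, coprod.inr_desc, coprod.inl_desc,
            ← Category.assoc, huniq (coprod.inr ≫ terminal.from ((⊤_ B) ⨿ ⊤_ B)) (𝟙 (⊤_ B)),
            Category.id_comp]
      rw [Category.assoc, h3, ← Category.assoc,
        huniq (g' ≫ terminal.from ((⊤_ B) ⨿ ⊤_ B)) (terminal.from X)]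
    · rw [hn, coprod.inr_desc_assoc, Category.assoc, hr, coprod.inr_desc, coprod.inr_desc,
        coprod.inr_map, Category.id_comp]
  calc f ≫ coprod.map (terminal.from X) (𝟙 (⊤_ B))
      = f ≫ n ≫ r := by rw [hnr]
    _ = (f ≫ n) ≫ r := by rw [Category.assoc]
    _ = terminal.from A ≫ coprod.inl ≫ r := by rw [Fn, Category.assoc]
    _ = terminal.from A ≫ coprod.inl := by rw [hr, coprod.inl_desc]
end

section
/- Let B be a positive operational category. Then for all morphisms f: A → B and g: C → D, the square with top f, left κ₁: A → A+C, bottom f+g: A+C → B+D, and right κ₁: B → B+D is a pullback. -/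
open CategoryTheory Limits

variable {B : Type*} [Category B] [HasBinaryCoproducts B] [HasInitial B] [HasTerminal B]

/-- in a positive operational category, for all `f : A ⟶ X` and
`g : A' ⟶ X'`, the square `(f, κ₁ : A ⟶ A+A', κ₁ : X ⟶ X+X', f+g)` is a pullback. -/
theorem stmt15 (hjm : JMCond B) (hpb : PBCond B) (hpos : PosCond B) :
    ∀ {A X A' X' : B} (f : A ⟶ X) (g : A' ⟶ X'),
      IsPullback f (coprod.inl : A ⟶ A ⨿ A') (coprod.inl : X ⟶ X ⨿ X')
        (coprod.map f g) := by
  intro A X A' X' f g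
  have hright := hpos X X'
  have houter := hpos A A'
  have h1 : f ≫ terminal.from X = terminal.from A := Subsingleton.elim _ _
  have h2 : coprod.map f g ≫ coprod.map (terminal.from X) (terminal.from X') =
      coprod.map (terminal.from A) (terminal.from A') := by
    rw [coprod.map_map]
    congr 1 <;> exact Subsingleton.elim _ _
  refine IsPullback.of_right ?_ (by simp) hright
  rw [h1, h2]
  exact houter
end

section
/- Let B be a category with finite coproducts and terminal object 1 in which the squares !: A → 1, κ₁: A → A+B, !+!: A+B → 1+1, κ₁: 1 → 1+1 are pullbacks. Suppose (C, I, ♦) and (C, I, ♦') are two families of discarding maps each making C = Par(B) an operational category in partial form with the same underlying category and object I. Then ♦_A = ♦'_A for all A. (More abstractly: in a positive operational category in partial form, the discarding structure is unique.) -/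
open CategoryTheory Limits

/-- in a positive operational category in partial form, the discarding
structure is unique: if `(C, I, ♦)` and `(C, I, ♦')` both satisfy the axioms of an
operational category in partial form (with the same underlying category and object `I`),
and positivity holds (a sum being zero forces both summands to be zero, and
`♦ ∘ f = 0` implies `f = 0` for either discarding family), then `♦ = ♦'`. -/
theorem stmt16 {C : Type*} [Category C] [HasBinaryCoproducts C] [HasZeroObject C]
    [HasZeroMorphisms C] (I : C) (dis dis' : ∀ A : C, A ⟶ I)
    (h1 : dis I = 𝟙 I)
    (h2 : ∀ A B : C, dis (A ⨿ B) = coprod.desc (dis A) (dis B))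
    (h3 : ∀ (A : C) {X : C} (f g : X ⟶ A ⨿ A),
      f ≫ coprod.desc (𝟙 A) 0 = g ≫ coprod.desc (𝟙 A) 0 →
      f ≫ coprod.desc 0 (𝟙 A) = g ≫ coprod.desc 0 (𝟙 A) → f = g)
    (h4 : ∀ {A B : C} (f : A ⟶ B), ∃! g : A ⟶ B ⨿ I,
      g ≫ dis (B ⨿ I) = dis A ∧ g ≫ coprod.desc (𝟙 B) 0 = f)
    (h1' : dis' I = 𝟙 I)
    (h2' : ∀ A B : C, dis' (A ⨿ B) = coprod.desc (dis' A) (dis' B))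
    (h4' : ∀ {A B : C} (f : A ⟶ B), ∃! g : A ⟶ B ⨿ I,
      g ≫ dis' (B ⨿ I) = dis' A ∧ g ≫ coprod.desc (𝟙 B) 0 = f)
    -- positivity: if a sum is zero then both summands are zero
    (hposSum : ∀ {A X : C} (h : A ⟶ X ⨿ X),
      h ≫ coprod.desc (𝟙 X) (𝟙 X) = 0 →
      h ≫ coprod.desc (𝟙 X) 0 = 0 ∧ h ≫ coprod.desc 0 (𝟙 X) = 0)
    -- positivity: discarding reflects zero, for both families
    (hposDis : ∀ {A X : C} (f : A ⟶ X), f ≫ dis X = 0 → f = 0)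
    (hposDis' : ∀ {A X : C} (f : A ⟶ X), f ≫ dis' X = 0 → f = 0) :
    ∀ A : C, dis A = dis' A := by
  intro A
  have hdII' : dis' (I ⨿ I) = coprod.desc (𝟙 I) (𝟙 I) := by rw [h2', h1']
  have hdII : dis (I ⨿ I) = coprod.desc (𝟙 I) (𝟙 I) := by rw [h2, h1]
  have hdIII : dis ((I ⨿ I) ⨿ I)
      = coprod.desc (coprod.desc (𝟙 I) (𝟙 I)) (𝟙 I) := by rw [h2, hdII, h1]
  -- factor `dis A` through the dis'-structure
  obtain ⟨g', ⟨hg'1, hg'2⟩, -⟩ := h4' (dis A)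
  -- factor `g'` through the dis-structure
  obtain ⟨w, ⟨hw1, hw2⟩, -⟩ := h4 g'
  rw [hdIII] at hw1
  -- the dis-factorization of `dis A` is unique
  obtain ⟨k, -, huniq⟩ := h4 (dis A)
  -- ψ merges the last two coordinates of w
  set ψ : A ⟶ I ⨿ I := w ≫ coprod.desc (𝟙 (I ⨿ I)) coprod.inr with hψdef
  have hψ : ψ = dis A ≫ coprod.inl := by
    have e1 : ψ = k := by
      apply huniq
      constructor
      · rw [hψdef, hdII, Category.assoc]
        have : coprod.desc (𝟙 (I ⨿ I)) coprod.inr ≫ coprod.desc (𝟙 I) (𝟙 I)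
            = coprod.desc (coprod.desc (𝟙 I) (𝟙 I)) (𝟙 I) := by
          apply coprod.hom_ext <;> simp [coprod.inl_desc, coprod.inr_desc, coprod.inl_desc_assoc, coprod.inr_desc_assoc]
        rw [this, hw1]
      · rw [hψdef, Category.assoc]
        have : coprod.desc (𝟙 (I ⨿ I)) coprod.inr ≫ coprod.desc (𝟙 I) (0 : I ⟶ I)
            = coprod.desc (𝟙 (I ⨿ I)) (0 : I ⟶ I ⨿ I) ≫ coprod.desc (𝟙 I) 0 := by
          apply coprod.hom_ext <;> simp [coprod.inl_desc, coprod.inr_desc, coprod.inl_desc_assoc, coprod.inr_desc_assoc]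
        rw [this, ← Category.assoc, hw2, hg'2]
    have e2 : dis A ≫ coprod.inl = k := by
      apply huniq
      constructor
      · rw [hdII, Category.assoc]; simp [coprod.inl_desc, coprod.inr_desc, coprod.inl_desc_assoc, coprod.inr_desc_assoc]
      · rw [Category.assoc]; simp [coprod.inl_desc, coprod.inr_desc, coprod.inl_desc_assoc, coprod.inr_desc_assoc]
    rw [e1, e2]
  -- hence the merge of the last two coordinates is zero
  have hσ : w ≫ coprod.desc (coprod.desc (0 : I ⟶ I) (𝟙 I)) (𝟙 I) = 0 := by
    have : coprod.desc (𝟙 (I ⨿ I)) coprod.inr ≫ coprod.desc (0 : I ⟶ I) (𝟙 I)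
        = coprod.desc (coprod.desc (0 : I ⟶ I) (𝟙 I)) (𝟙 I) := by
      apply coprod.hom_ext <;> simp [coprod.inl_desc, coprod.inr_desc, coprod.inl_desc_assoc, coprod.inr_desc_assoc]
    calc w ≫ coprod.desc (coprod.desc (0 : I ⟶ I) (𝟙 I)) (𝟙 I)
        = ψ ≫ coprod.desc (0 : I ⟶ I) (𝟙 I) := by rw [hψdef, Category.assoc, this]
      _ = dis A ≫ coprod.inl ≫ coprod.desc (0 : I ⟶ I) (𝟙 I) := by
          rw [hψ, Category.assoc]
      _ = 0 := by simp [coprod.inl_desc, coprod.inr_desc, coprod.inl_desc_assoc, coprod.inr_desc_assoc]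
  -- χ : the last two coordinates placed side by side; its codiagonal is zero
  set χ : A ⟶ I ⨿ I :=
    w ≫ coprod.desc (coprod.desc (0 : I ⟶ I ⨿ I) coprod.inl) coprod.inr with hχdef
  have hχ0 : χ = 0 := by
    apply hposDis (X := I ⨿ I)
    rw [hdII, hχdef, Category.assoc]
    have : coprod.desc (coprod.desc (0 : I ⟶ I ⨿ I) coprod.inl) coprod.inr
        ≫ coprod.desc (𝟙 I) (𝟙 I)
        = coprod.desc (coprod.desc (0 : I ⟶ I) (𝟙 I)) (𝟙 I) := by
      apply coprod.hom_ext
      · apply coprod.hom_ext <;> simp [coprod.inl_desc, coprod.inr_desc, coprod.inl_desc_assoc, coprod.inr_desc_assoc]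
      · simp [coprod.inl_desc, coprod.inr_desc, coprod.inl_desc_assoc, coprod.inr_desc_assoc]
    · rw [this, hσ]
  -- the second component of g' is zero
  have hs : g' ≫ coprod.desc (0 : I ⟶ I) (𝟙 I) = 0 := by
    have e1 : g' ≫ coprod.desc (0 : I ⟶ I) (𝟙 I)
        = w ≫ coprod.desc (coprod.desc (0 : I ⟶ I) (𝟙 I)) (0 : I ⟶ I) := by
      rw [← hw2, Category.assoc]
      congr 1
      apply coprod.hom_ext <;> simp
    have e2 : χ ≫ coprod.desc (𝟙 I) (0 : I ⟶ I)
        = w ≫ coprod.desc (coprod.desc (0 : I ⟶ I) (𝟙 I)) (0 : I ⟶ I) := by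
      rw [hχdef, Category.assoc]
      congr 1
      apply coprod.hom_ext
      · apply coprod.hom_ext <;> simp [coprod.inl_desc, coprod.inr_desc, coprod.inl_desc_assoc, coprod.inr_desc_assoc]
      · simp [coprod.inl_desc, coprod.inr_desc, coprod.inl_desc_assoc, coprod.inr_desc_assoc]
    rw [e1, ← e2, hχ0, zero_comp]
  -- joint monicity gives g' = dis A ≫ inl
  have hg' : g' = dis A ≫ coprod.inl := by
    apply h3 I
    · rw [hg'2, Category.assoc]; simp [coprod.inl_desc, coprod.inr_desc, coprod.inl_desc_assoc, coprod.inr_desc_assoc]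
    · rw [hs, Category.assoc]; simp [coprod.inl_desc, coprod.inr_desc, coprod.inl_desc_assoc, coprod.inr_desc_assoc]
  have : dis' A = dis A := by
    rw [← hg'1, hg', hdII', Category.assoc]; simp [coprod.inl_desc, coprod.inr_desc, coprod.inl_desc_assoc, coprod.inr_desc_assoc]
  exact this.symm
end

section
/- Let (C, I, ♦) be an operational category in partial form. Then coarse-graining of effects is cancellative: if h, h': A → I+I are total morphisms (♦_{I+I}∘h = ♦_A = ♦_{I+I}∘h') with ▷₁∘h = ▷₁∘h', then ▷₂∘h = ▷₂∘h'. -/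
open CategoryTheory Limits

/-- in an operational category in partial form, coarse-graining of
effects is cancellative: if `h, h' : A ⟶ I+I` are total and `▷₁ ∘ h = ▷₁ ∘ h'`,
then `▷₂ ∘ h = ▷₂ ∘ h'`. -/
theorem stmt18 {C : Type*} [Category C] [HasBinaryCoproducts C] [HasZeroObject C]
    [HasZeroMorphisms C] (I : C) (dis : ∀ A : C, A ⟶ I)
    (h1 : dis I = 𝟙 I)
    (h2 : ∀ A B : C, dis (A ⨿ B) = coprod.desc (dis A) (dis B))
    (h3 : ∀ (A : C) {X : C} (f g : X ⟶ A ⨿ A),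
      f ≫ coprod.desc (𝟙 A) 0 = g ≫ coprod.desc (𝟙 A) 0 →
      f ≫ coprod.desc 0 (𝟙 A) = g ≫ coprod.desc 0 (𝟙 A) → f = g)
    (h4 : ∀ {A B : C} (f : A ⟶ B), ∃! g : A ⟶ B ⨿ I,
      g ≫ dis (B ⨿ I) = dis A ∧ g ≫ coprod.desc (𝟙 B) 0 = f) :
    ∀ {A : C} (h h' : A ⟶ I ⨿ I),
      h ≫ dis (I ⨿ I) = dis A → h' ≫ dis (I ⨿ I) = dis A →
      h ≫ coprod.desc (𝟙 I) 0 = h' ≫ coprod.desc (𝟙 I) 0 →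
      h ≫ coprod.desc 0 (𝟙 I) = h' ≫ coprod.desc 0 (𝟙 I) := by
  intro A h h' ht h't hfst
  obtain ⟨g, _, hg⟩ := h4 (h ≫ coprod.desc (𝟙 I) 0)
  have e1 : h = g := hg h ⟨ht, rfl⟩
  have e2 : h' = g := hg h' ⟨h't, hfst.symm⟩
  rw [e1, e2]
end

section
/- Let B be an effectus: a positive operational category such that the square with top !+id: A+B → 1+B, left id+!: A+B → A+1, right !+!: 1+B → 1+1, bottom !+!: A+1 → 1+1 is a pullback. Then in Par(B), for any partial morphisms f: C → A and g: C → B such that (♦∘g) = (♦∘f)^⊥, where e^⊥ = [κ₂,κ₁]∘e for e: C → 1+1, there exists a morphism h: C → A+B in Par(B) with ▷₁∘h = f and ▷₂∘h = g. -/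
open CategoryTheory Limits

variable {B : Type*} [Category B] [HasBinaryCoproducts B] [HasInitial B] [HasTerminal B]

/-- The effectus pullback condition: the squares
`(!+id : A+X ⟶ 1+X, id+! : A+X ⟶ A+1, !+! : 1+X ⟶ 1+1, !+! : A+1 ⟶ 1+1)` are pullbacks. -/
def EffCond (B : Type*) [Category B] [HasBinaryCoproducts B] [HasInitial B]
    [HasTerminal B] : Prop :=
  ∀ A X : B, IsPullback (coprod.map (terminal.from A) (𝟙 X))
    (coprod.map (𝟙 A) (terminal.from X))
    (coprod.map (𝟙 (⊤_ B)) (terminal.from X))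
    (coprod.map (terminal.from A) (𝟙 (⊤_ B)))

/-- in an effectus `B`, partial morphisms `f : C ⟶ A`, `g : C ⟶ B` whose
discards are complementary (`♦ ∘ g = (♦ ∘ f)^⊥`, where `e^⊥ = [κ₂,κ₁] ∘ e`) can be
combined: there is `h : C ⟶ A+B` in `Par(B)` with `▷₁ ∘ h = f` and `▷₂ ∘ h = g`. -/
theorem stmt19 (hjm : JMCond B) (hpos : PosCond B) (heff : EffCond B) :
    ∀ {Z A X : B} (f : Z ⟶ A ⨿ ⊤_ B) (g : Z ⟶ X ⨿ ⊤_ B),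
      g ≫ coprod.map (terminal.from X) (𝟙 (⊤_ B)) =
        (f ≫ coprod.map (terminal.from A) (𝟙 (⊤_ B))) ≫ coprod.desc coprod.inr coprod.inl →
      ∃ h : Z ⟶ (A ⨿ X) ⨿ ⊤_ B,
        pcomp h (coprod.desc coprod.inl (terminal.from X ≫ coprod.inr) :
          A ⨿ X ⟶ A ⨿ ⊤_ B) = f ∧
        pcomp h (coprod.desc (terminal.from A ≫ coprod.inr) coprod.inl :
          A ⨿ X ⟶ X ⨿ ⊤_ B) = g := by
  intro Z A X f g hyp
  have hpb := heff A X
  have hswap : (coprod.desc coprod.inr coprod.inl : (⊤_ B) ⨿ ⊤_ B ⟶ _) ≫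
      coprod.desc coprod.inr coprod.inl = 𝟙 _ := by ext <;> simp [coprod.inl_desc, coprod.inr_desc]
  have hcomm : (coprod.desc coprod.inr coprod.inl : X ⨿ ⊤_ B ⟶ _) ≫
      coprod.map (𝟙 (⊤_ B)) (terminal.from X) =
      coprod.map (terminal.from X) (𝟙 (⊤_ B)) ≫
        (coprod.desc coprod.inr coprod.inl : (⊤_ B) ⨿ ⊤_ B ⟶ _) := by
    ext <;> simp
  have w : (g ≫ coprod.desc coprod.inr coprod.inl) ≫
      coprod.map (𝟙 (⊤_ B)) (terminal.from X) =
      f ≫ coprod.map (terminal.from A) (𝟙 (⊤_ B)) := by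
    rw [Category.assoc, hcomm, ← Category.assoc, hyp, Category.assoc, Category.assoc,
      hswap, Category.comp_id]
  refine ⟨hpb.lift (g ≫ coprod.desc coprod.inr coprod.inl) f w ≫ coprod.inl, ?_, ?_⟩
  · have h2 := hpb.lift_snd (g ≫ coprod.desc coprod.inr coprod.inl) f w
    have e1 : (coprod.desc coprod.inl (terminal.from X ≫ coprod.inr) : A ⨿ X ⟶ _)
        = coprod.map (𝟙 A) (terminal.from X) := by ext <;> simp [coprod.inl_desc, coprod.inr_desc]
    simp only [pcomp, Category.assoc, coprod.inl_desc, e1]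
    exact h2
  · have h1 := hpb.lift_fst (g ≫ coprod.desc coprod.inr coprod.inl) f w
    have e2 : (coprod.desc (terminal.from A ≫ coprod.inr) coprod.inl : A ⨿ X ⟶ _)
        = coprod.map (terminal.from A) (𝟙 X) ≫ coprod.desc coprod.inr coprod.inl := by
      ext <;> simp
    have hswapX : (coprod.desc coprod.inr coprod.inl : X ⨿ ⊤_ B ⟶ _) ≫
        coprod.desc coprod.inr coprod.inl = 𝟙 _ := by ext <;> simp [coprod.inl_desc, coprod.inr_desc]
    simp only [pcomp, Category.assoc, coprod.inl_desc, e2]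
    rw [← Category.assoc, h1, Category.assoc, hswapX, Category.comp_id]
end
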